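/- arXiv:2203.10414 — 5 statements merged into one kernel-verified Lean document; each statement's English description precedes it below -/
import Mathlib

section
/- Let T > 0, m ≥ 1, k ≥ 0 be integers, and let u : [0,T)×ℝ → ℝ^m be such that u(t,·) is k-times continuously differentiable in x for each t, ∂ₜu exists on (0,T)×ℝ, and the evolution system holds pointwise: ∂ₜu(t,x) + w(t,x) = g(t,x) for all (t,x) ∈ (0,T)×ℝ, where w, g : (0,T)×ℝ → ℝ^m. Assume: (C0) there is a conserved density h for u; (C1) there exist t₀ ∈ (0,T) and real numbers a < b such that u(t₀,x) = 0, ∂ₜu(t₀,x) = 0, and w(t₀,x) = 0 for every x ∈ [a,b] (the condition on w holds automatically when w = A([u])u is given by differential operators acting on u, since u vanishes on [a,b]); (C2) if g(t₀,x) = 0 for all x ∈ [a,b], then u(t₀,x) = 0 for all x ∈ ℝ. Then u(t,x) = 0 for all (t,x) ∈ [0,T)×ℝ. -/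
open MeasureTheory Set

/-- **Theorem 2.1 (conserved quantity approach).**
An evolution system `∂ₜu + w = g` on `[0,T) × ℝ` with values in `ℝ^m`, admitting a
conserved density `h` (C0), that vanishes together with `∂ₜu` and `w` on a time slice
`{t₀} × [a,b]` (C1), and whose nonlocal term `g` satisfies the unique-continuation
condition (C2), has `u ≡ 0`. -/
theorem conserved_quantity_unique_continuation
    (T : ℝ) (hT : 0 < T) (m k : ℕ) (hm : 1 ≤ m)
    (u w g : ℝ → ℝ → (Fin m → ℝ))
    -- regularity: u(t,·) is k-times continuously differentiable in x
    (hreg : ∀ t ∈ Set.Ico (0:ℝ) T, ContDiff ℝ (k : ℕ∞) (u t))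
    -- ∂ₜu exists on (0,T) × ℝ
    (hut : ∀ t ∈ Set.Ioo (0:ℝ) T, ∀ x : ℝ, DifferentiableAt ℝ (fun s => u s x) t)
    -- the evolution system holds pointwise: ∂ₜu + w = g
    (heq : ∀ t ∈ Set.Ioo (0:ℝ) T, ∀ x : ℝ,
      deriv (fun s => u s x) t + w t x = g t x)
    -- (C0): conserved density h
    (h : (Fin (k+1) → (Fin m → ℝ)) → ℝ)
    (h_cont : Continuous h)
    (h_sign : (∀ y, 0 ≤ h y) ∨ (∀ y, h y ≤ 0))
    (h_zero : ∀ y, h y = 0 ↔ y = 0)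
    (h_int : ∀ t ∈ Set.Ico (0:ℝ) T,
      Integrable (fun x : ℝ => h (fun i => iteratedDeriv i.1 (u t) x)))
    (h_cons : ∃ c : ℝ, ∀ t ∈ Set.Ico (0:ℝ) T,
      (∫ x : ℝ, h (fun i => iteratedDeriv i.1 (u t) x)) = c)
    -- (C1)
    (t₀ : ℝ) (ht₀ : t₀ ∈ Set.Ioo (0:ℝ) T) (a b : ℝ) (hab : a < b)
    (hC1u : ∀ x ∈ Set.Icc a b, u t₀ x = 0)
    (hC1ut : ∀ x ∈ Set.Icc a b, deriv (fun s => u s x) t₀ = 0)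
    (hC1w : ∀ x ∈ Set.Icc a b, w t₀ x = 0)
    -- (C2)
    (hC2 : (∀ x ∈ Set.Icc a b, g t₀ x = 0) → ∀ x : ℝ, u t₀ x = 0) :
    ∀ t ∈ Set.Ico (0:ℝ) T, ∀ x : ℝ, u t x = 0 := by
  -- Step 1: g t₀ vanishes on [a,b]
  have hg0 : ∀ x ∈ Set.Icc a b, g t₀ x = 0 := by
    intro x hx
    rw [← heq t₀ ht₀ x, hC1ut x hx, hC1w x hx, add_zero]
  -- Step 2: u t₀ ≡ 0
  have hu0 : ∀ x : ℝ, u t₀ x = 0 := hC2 hg0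
  have hu0' : u t₀ = fun _ => 0 := funext hu0
  -- Step 3: the conserved constant is 0
  obtain ⟨c, hc⟩ := h_cons
  have ht₀' : t₀ ∈ Set.Ico (0:ℝ) T := ⟨le_of_lt ht₀.1, ht₀.2⟩
  have hiter0 : ∀ i : ℕ, iteratedDeriv i (u t₀) = fun _ => (0 : Fin m → ℝ) := by
    intro i
    rw [hu0']
    ext x
    rw [iteratedDeriv]
    simp [iteratedFDeriv_zero_fun]
  have hc0 : c = 0 := by
    have := hc t₀ ht₀'
    rw [← this]
    have : (fun x : ℝ => h (fun i => iteratedDeriv i.1 (u t₀) x)) = fun _ => 0 := by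
      funext x
      have : (fun i : Fin (k+1) => iteratedDeriv i.1 (u t₀) x) = 0 := by
        funext i
        rw [hiter0 i.1]
        rfl
      rw [this, (h_zero 0).mpr rfl]
    rw [this]
    simp
  -- Step 4: for each t, the integrand vanishes everywhere
  intro t ht x
  set f : ℝ → ℝ := fun x : ℝ => h (fun i => iteratedDeriv i.1 (u t) x) with hf
  have hfcont : Continuous f := by
    apply h_cont.comp
    apply continuous_pi
    intro i
    exact (hreg t ht).continuous_iteratedDeriv i.1 (by exact_mod_cast Nat.le_of_lt_succ i.2)
  have hfint : Integrable f := h_int t ht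
  have hfI : ∫ x : ℝ, f x = 0 := by rw [hc t ht, hc0]
  have hfzero : f = 0 := by
    rcases h_sign with hpos | hneg
    · have : f =ᵐ[volume] 0 := by
        rw [← integral_eq_zero_iff_of_nonneg (fun x => hpos _) hfint]
        exact hfI
      exact (hfcont.ae_eq_iff_eq volume continuous_const).mp this
    · have hnegf : (0:ℝ → ℝ) ≤ -f := fun x => by
        simp only [Pi.neg_apply, Pi.zero_apply, Left.nonneg_neg_iff]
        exact hneg _
      have hIneg : ∫ x : ℝ, (-f) x = 0 := by
        simp only [Pi.neg_apply]
        rw [integral_neg, hfI, neg_zero]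
      have : (-f) =ᵐ[volume] 0 := by
        rw [← integral_eq_zero_iff_of_nonneg hnegf hfint.neg]
        exact hIneg
      have := (hfcont.neg.ae_eq_iff_eq volume continuous_const).mp this
      funext y
      show f y = 0
      exact neg_eq_zero.mp (congrFun this y)
  have : (fun i : Fin (k+1) => iteratedDeriv i.1 (u t) x) = 0 :=
    (h_zero _).mp (congrFun hfzero x)
  have := congrFun this ⟨0, Nat.succ_pos k⟩
  simpa [iteratedDeriv_zero] using this
end

section
/- Let T > 0, m ≥ 1, k ≥ 0 be integers, and let u : [0,T)×ℝ → ℝ^m be such that u(t,·) is k-times continuously differentiable in x for each t, ∂ₜu exists on (0,T)×ℝ, and ∂ₜu(t,x) + w(t,x) = g(t,x) for all (t,x) ∈ (0,T)×ℝ, where w, g : (0,T)×ℝ → ℝ^m. Suppose there exist t₀ ∈ (0,T), real numbers a < b, and an index i ∈ {1,…,m} such that the i-th component g^i(t₀,·) is continuously differentiable on [a,b], and: (C0) there is a conserved density h for u; (C3) u(t₀,x) = 0 for all x ∈ [a,b]; (C4) ∂ₜu(t₀,a) = ∂ₜu(t₀,b), and moreover w(t₀,a) = w(t₀,b) (which holds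 automatically when w = A([u])u is given by differential operators acting on u, by (C3)); (C5) ∂ₓg^i(t₀,·) is either nonnegative on all of (a,b) or nonpositive on all of (a,b); (C6) if ∂ₓg^i(t₀,x) = 0 for all x ∈ (a,b), then u(t₀,x) = 0 for all x ∈ ℝ. Then u(t,x) = 0 for all (t,x) ∈ [0,T)×ℝ. -/
/-!
Evaluating `∂ₜu + w = g` at `(t₀, a)` and `(t₀, b)` and using (C4) gives `gⁱ(t₀, a) = gⁱ(t₀, b)`.
By (C5), `gⁱ(t₀, ·)` is monotone or antitone on `[a, b]`, hence constant there, so `∂ₓgⁱ(t₀, ·)` vanishes on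
`(a, b)` and (C6) yields `u(t₀, ·) ≡ 0`. The conserved quantity is therefore `H ≡ H(t₀) = 0`; as
`h` is continuous and of one sign, `h` vanishes along the `k`-jet of every `u(t, ·)`, and since
`h` vanishes only at `0`, so does the jet.
-/

open MeasureTheory Set

section OneSigned

variable {X : Type*} [TopologicalSpace X] [MeasurableSpace X] {μ : Measure X} [μ.IsOpenPosMeasure]

theorem Continuous.eq_zero_of_integral_eq_zero_of_nonneg_or_nonpos {f : X → ℝ}
    (hf : Continuous f) (hfi : Integrable f μ) (hsign : 0 ≤ f ∨ f ≤ 0)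
    (h0 : ∫ x, f x ∂μ = 0) : f = 0 := by
  funext x
  by_contra hx
  rcases hsign with hnonneg | hnonpos
  · exact (integral_pos_of_integrable_nonneg_nonzero hf hfi hnonneg hx).ne' h0
  · have hpos := integral_pos_of_integrable_nonneg_nonzero hf.neg hfi.neg (neg_nonneg.2 hnonpos)
      (neg_ne_zero.2 hx)
    rw [Pi.neg_def, integral_neg, h0, neg_zero] at hpos
    exact hpos.false

theorem eq_zero_of_integral_comp_eq_zero {E : Type*} [TopologicalSpace E] [Zero E]
    {h : E → ℝ} (hh : Continuous h) (hsign : (∀ y, 0 ≤ h y) ∨ (∀ y, h y ≤ 0))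
    (hzero : ∀ y, h y = 0 ↔ y = 0) {φ : X → E} (hφ : Continuous φ)
    (hint : Integrable (h ∘ φ) μ) (h0 : ∫ x, h (φ x) ∂μ = 0) : φ = 0 := by
  have hcomp : h ∘ φ = 0 :=
    (hh.comp hφ).eq_zero_of_integral_eq_zero_of_nonneg_or_nonpos hint
      (hsign.imp (fun hs x => hs (φ x)) (fun hs x => hs (φ x))) h0
  exact funext fun x => (hzero (φ x)).1 (congrFun hcomp x)

end OneSigned

section Endpoints

variable {F f : ℝ → ℝ} {a b : ℝ}

theorem eqOn_Icc_of_monotoneOn_or_antitoneOn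
    (hF : MonotoneOn F (Icc a b) ∨ AntitoneOn F (Icc a b)) (hFab : F a = F b) :
    EqOn F (fun _ => F a) (Icc a b) := by
  intro x hx
  have ha : a ∈ Icc a b := ⟨le_rfl, hx.1.trans hx.2⟩
  have hb : b ∈ Icc a b := ⟨hx.1.trans hx.2, le_rfl⟩
  rcases hF with hmono | hanti
  · exact le_antisymm (hFab ▸ hmono hx hb hx.2) (hmono ha hx hx.1)
  · exact le_antisymm (hanti ha hx hx.1) (hFab ▸ hanti hx hb hx.2)

theorem monotoneOn_or_antitoneOn_of_hasDerivAt (hF : ∀ x ∈ Icc a b, HasDerivAt F (f x) x)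
    (hsign : (∀ x ∈ Ioo a b, 0 ≤ f x) ∨ (∀ x ∈ Ioo a b, f x ≤ 0)) :
    MonotoneOn F (Icc a b) ∨ AntitoneOn F (Icc a b) := by
  have hcont : ContinuousOn F (Icc a b) := fun x hx => (hF x hx).continuousAt.continuousWithinAt
  have hderiv : ∀ x ∈ Ioo a b, HasDerivWithinAt F (f x) (Ioo a b) x :=
    fun x hx => (hF x (Ioo_subset_Icc_self hx)).hasDerivWithinAt
  rcases hsign with hnonneg | hnonpos
  · refine .inl (monotoneOn_of_hasDerivWithinAt_nonneg (f' := f) (convex_Icc a b) hcont ?_ ?_) <;>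
      rwa [interior_Icc]
  · refine .inr (antitoneOn_of_hasDerivWithinAt_nonpos (f' := f) (convex_Icc a b) hcont ?_ ?_) <;>
      rwa [interior_Icc]

theorem eqOn_zero_of_hasDerivAt_of_apply_eq (hF : ∀ x ∈ Icc a b, HasDerivAt F (f x) x)
    (hsign : (∀ x ∈ Ioo a b, 0 ≤ f x) ∨ (∀ x ∈ Ioo a b, f x ≤ 0)) (hFab : F a = F b) :
    EqOn f 0 (Ioo a b) := by
  intro x hx
  have hconst := eqOn_Icc_of_monotoneOn_or_antitoneOn
    (monotoneOn_or_antitoneOn_of_hasDerivAt hF hsign) hFab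
  have hlocal : F =ᶠ[nhds x] fun _ => F a :=
    Filter.eventually_of_mem (Icc_mem_nhds hx.1 hx.2) hconst
  exact (hF x (Ioo_subset_Icc_self hx)).unique
    ((hasDerivAt_const x (F a)).congr_of_eventuallyEq hlocal)

end Endpoints

section Jet

variable {E : Type*} [NormedAddCommGroup E] [NormedSpace ℝ E]

noncomputable def jet (k : ℕ) (f : ℝ → E) (x : ℝ) : Fin (k + 1) → E := fun i => iteratedDeriv i f x

theorem continuous_jet {k : ℕ} {f : ℝ → E} (hf : ContDiff ℝ k f) : Continuous (jet k f) :=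
  continuous_pi fun i => hf.continuous_iteratedDeriv i (by exact_mod_cast Nat.lt_succ_iff.1 i.2)

@[simp]
theorem jet_zero (k : ℕ) : jet k (0 : ℝ → E) = 0 := by
  funext x i
  simp [jet, Pi.zero_def]

@[simp]
theorem jet_apply_zero (k : ℕ) (f : ℝ → E) (x : ℝ) : jet k f x 0 = f x := by
  simp [jet]

end Jet

theorem conserved_quantity_unique_continuation_FTC_general
    (T : ℝ) (m k : ℕ)
    (u w g : ℝ → ℝ → (Fin m → ℝ))
    (hreg : ∀ t ∈ Set.Ico (0:ℝ) T, ContDiff ℝ (k : ℕ∞) (u t))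
    (heq : ∀ t ∈ Set.Ioo (0:ℝ) T, ∀ x : ℝ,
      deriv (fun s => u s x) t + w t x = g t x)
    -- (C0): conserved density h
    (h : (Fin (k+1) → (Fin m → ℝ)) → ℝ)
    (h_cont : Continuous h)
    (h_sign : (∀ y, 0 ≤ h y) ∨ (∀ y, h y ≤ 0))
    (h_zero : ∀ y, h y = 0 ↔ y = 0)
    (h_int : ∀ t ∈ Set.Ico (0:ℝ) T,
      Integrable (fun x : ℝ => h (fun i => iteratedDeriv i.1 (u t) x)))
    (h_cons : ∃ c : ℝ, ∀ t ∈ Set.Ico (0:ℝ) T,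
      (∫ x : ℝ, h (fun i => iteratedDeriv i.1 (u t) x)) = c)
    -- data: t₀, a < b, component i, and gᵢ' = ∂ₓ gⁱ(t₀,·), C¹ on [a,b]
    (t₀ : ℝ) (ht₀ : t₀ ∈ Set.Ioo (0:ℝ) T) (a b : ℝ) (i : Fin m)
    (g' : ℝ → ℝ)
    (hg' : ∀ x ∈ Set.Icc a b, HasDerivAt (fun y => g t₀ y i) (g' x) x)
    -- (C4)
    (hC4ut : deriv (fun s => u s a) t₀ = deriv (fun s => u s b) t₀)
    (hC4w : w t₀ a = w t₀ b)
    -- (C5)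
    (hC5 : (∀ x ∈ Set.Ioo a b, 0 ≤ g' x) ∨ (∀ x ∈ Set.Ioo a b, g' x ≤ 0))
    -- (C6)
    (hC6 : (∀ x ∈ Set.Ioo a b, g' x = 0) → ∀ x : ℝ, u t₀ x = 0) :
    ∀ t ∈ Set.Ico (0:ℝ) T, ∀ x : ℝ, u t x = 0 := by
  intro t ht x
  have hg_ends : g t₀ a = g t₀ b := by rw [← heq t₀ ht₀ a, ← heq t₀ ht₀ b, hC4ut, hC4w]
  have hu₀ : u t₀ = 0 :=
    funext (hC6 (eqOn_zero_of_hasDerivAt_of_apply_eq hg' hC5 (congrFun hg_ends i)))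
  obtain ⟨c, hc⟩ := h_cons
  have hc₀ : c = 0 := by
    rw [← hc t₀ ⟨ht₀.1.le, ht₀.2⟩]
    change ∫ x, h (jet k (u t₀) x) = 0
    simp [hu₀, (h_zero 0).2 rfl]
  have hjet : jet k (u t) = 0 :=
    eq_zero_of_integral_comp_eq_zero h_cont h_sign h_zero (continuous_jet (hreg t ht))
      (h_int t ht) ((hc t ht).trans hc₀)
  simpa using congrFun (congrFun hjet x) 0

/-- **Theorem 2.2 (conserved quantity approach via the fundamental theorem of calculus).**
An evolution system `∂ₜu + w = g` admitting a conserved density (C0), with `u`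
vanishing on a space slice (C3), matching time-derivative and transport data at the
endpoints (C4), a signed derivative of a component of `g` (C5) and the
unique-continuation condition (C6), has `u ≡ 0`. -/
theorem conserved_quantity_unique_continuation_FTC
    (T : ℝ) (hT : 0 < T) (m k : ℕ) (hm : 1 ≤ m)
    (u w g : ℝ → ℝ → (Fin m → ℝ))
    (hreg : ∀ t ∈ Set.Ico (0:ℝ) T, ContDiff ℝ (k : ℕ∞) (u t))
    (hut : ∀ t ∈ Set.Ioo (0:ℝ) T, ∀ x : ℝ, DifferentiableAt ℝ (fun s => u s x) t)
    (heq : ∀ t ∈ Set.Ioo (0:ℝ) T, ∀ x : ℝ,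
      deriv (fun s => u s x) t + w t x = g t x)
    -- (C0): conserved density h
    (h : (Fin (k+1) → (Fin m → ℝ)) → ℝ)
    (h_cont : Continuous h)
    (h_sign : (∀ y, 0 ≤ h y) ∨ (∀ y, h y ≤ 0))
    (h_zero : ∀ y, h y = 0 ↔ y = 0)
    (h_int : ∀ t ∈ Set.Ico (0:ℝ) T,
      Integrable (fun x : ℝ => h (fun i => iteratedDeriv i.1 (u t) x)))
    (h_cons : ∃ c : ℝ, ∀ t ∈ Set.Ico (0:ℝ) T,
      (∫ x : ℝ, h (fun i => iteratedDeriv i.1 (u t) x)) = c)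
    -- data: t₀, a < b, component i, and gᵢ' = ∂ₓ gⁱ(t₀,·), C¹ on [a,b]
    (t₀ : ℝ) (ht₀ : t₀ ∈ Set.Ioo (0:ℝ) T) (a b : ℝ) (hab : a < b) (i : Fin m)
    (g' : ℝ → ℝ)
    (hg' : ∀ x ∈ Set.Icc a b, HasDerivAt (fun y => g t₀ y i) (g' x) x)
    (hg'cont : ContinuousOn g' (Set.Icc a b))
    -- (C3)
    (hC3 : ∀ x ∈ Set.Icc a b, u t₀ x = 0)
    -- (C4)
    (hC4ut : deriv (fun s => u s a) t₀ = deriv (fun s => u s b) t₀)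
    (hC4w : w t₀ a = w t₀ b)
    -- (C5)
    (hC5 : (∀ x ∈ Set.Ioo a b, 0 ≤ g' x) ∨ (∀ x ∈ Set.Ioo a b, g' x ≤ 0))
    -- (C6)
    (hC6 : (∀ x ∈ Set.Ioo a b, g' x = 0) → ∀ x : ℝ, u t₀ x = 0) :
    ∀ t ∈ Set.Ico (0:ℝ) T, ∀ x : ℝ, u t x = 0 :=
  conserved_quantity_unique_continuation_FTC_general T m k u w g hreg heq h h_cont h_sign h_zero
    h_int h_cons t₀ ht₀ a b i g' hg' hC4ut hC4w hC5 hC6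
end

section
/- Let b ∈ (0,3], T > 0, and let u be a classical solution of the b-equation on [0,T)×ℝ. If there exist t₀ ∈ (0,T), real numbers c < d, and an open set Ω ⊆ (0,T)×ℝ with {t₀}×[c,d] ⊆ Ω and u(t,x) = 0 for all (t,x) ∈ Ω, then u(t₀,x) = 0 for all x ∈ ℝ. -/
open MeasureTheory Set

/-- The inverse Helmholtz operator `Λ⁻² = (1 - ∂ₓ²)⁻¹` on the line, given by
convolution with the kernel `e^{-|x|}/2`. -/
noncomputable def lam2 (w : ℝ → ℝ) (x : ℝ) : ℝ :=
  (1/2) * ∫ y : ℝ, Real.exp (-|x - y|) * w y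

/-- A classical solution of the `b`-equation
`uₜ + u uₓ = -∂ₓΛ⁻²((b/2)u² + ((3-b)/2)uₓ²)` on `[0,T) × ℝ`: for each `t ∈ [0,T)`,
`u(t,·)` is continuously differentiable with `u(t,·)` and `∂ₓu(t,·)` continuous,
bounded and integrable; `∂ₜu` exists on `(0,T) × ℝ`; and the equation holds
pointwise on `(0,T) × ℝ`. -/
def IsBEquationSolution (b T : ℝ) (u : ℝ → ℝ → ℝ) : Prop :=
  (∀ t ∈ Set.Ico (0:ℝ) T,
    ContDiff ℝ 1 (u t) ∧
    (∃ C : ℝ, ∀ x, |u t x| ≤ C) ∧ Integrable (u t) ∧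
    (∃ C : ℝ, ∀ x, |deriv (u t) x| ≤ C) ∧ Integrable (deriv (u t))) ∧
  (∀ t ∈ Set.Ioo (0:ℝ) T, ∀ x : ℝ, DifferentiableAt ℝ (fun s => u s x) t) ∧
  (∀ t ∈ Set.Ioo (0:ℝ) T, ∀ x : ℝ,
    deriv (fun s => u s x) t + u t x * deriv (u t) x =
      -(deriv (lam2 (fun y => (b/2) * (u t y)^2 + ((3-b)/2) * (deriv (u t) y)^2)) x))

/-!
Near a point `(t₀, c)` of `Ω` both `u` and `uₜ` vanish, so the equation forces
`∂ₓΛ⁻²F = 0` near `c`, where `F = (b/2)u² + ((3-b)/2)uₓ² ≥ 0` is taken at time `t₀`.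
Differentiating once more with `∂ₓ²Λ⁻² = Λ⁻² - 1` gives `Λ⁻²F(c) = F(c) = 0`. The kernel
`e^{-|x|}` is positive and `F` is continuous and nonnegative, so `F ≡ 0`, and `b > 0` turns
this into `u(t₀, ·) ≡ 0`.
-/

open Filter Topology Real

theorem hasDerivAt_setIntegral_Iic {g : ℝ → ℝ} (hg : Continuous g)
    (hi : ∀ a, IntegrableOn g (Iic a)) (x : ℝ) :
    HasDerivAt (fun a => ∫ y in Iic a, g y) (g x) x := by
  have hrepr : (fun a => ∫ y in Iic a, g y) =
      fun a => (∫ y in Iic 0, g y) + ∫ y in (0:ℝ)..a, g y := by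
    funext a
    rw [← intervalIntegral.integral_Iic_sub_Iic (hi 0) (hi a), add_sub_cancel]
  rw [hrepr]
  exact (intervalIntegral.integral_hasDerivAt_right (hg.intervalIntegrable _ _)
    (hg.stronglyMeasurableAtFilter _ _) hg.continuousAt).const_add _

theorem hasDerivAt_setIntegral_Ioi {g : ℝ → ℝ} (hg : Continuous g)
    (hi : ∀ a, IntegrableOn g (Ioi a)) (x : ℝ) :
    HasDerivAt (fun a => ∫ y in Ioi a, g y) (-g x) x := by
  have hrepr : (fun a => ∫ y in Ioi a, g y) =
      fun a => (∫ y in Ioi 0, g y) - ∫ y in (0:ℝ)..a, g y := by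
    funext a
    rw [← intervalIntegral.integral_Ioi_sub_Ioi' (hi 0) (hi a), sub_sub_cancel]
  rw [hrepr]
  exact (intervalIntegral.integral_hasDerivAt_right (hg.intervalIntegrable _ _)
    (hg.stronglyMeasurableAtFilter _ _) hg.continuousAt).const_sub _

theorem MeasureTheory.Integrable.sq_of_abs_le {α : Type*} [MeasurableSpace α] {μ : Measure α}
    {f : α → ℝ} {C : ℝ} (hf : Integrable f μ) (hC : ∀ x, |f x| ≤ C) :
    Integrable (fun x => f x ^ 2) μ := by
  simpa only [sq] using hf.bdd_mul hf.aestronglyMeasurable (Eventually.of_forall hC)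

section Helmholtz

variable {w : ℝ → ℝ}

noncomputable def lam2Left (w : ℝ → ℝ) (x : ℝ) : ℝ := ∫ y in Iic x, exp y * w y

noncomputable def lam2Right (w : ℝ → ℝ) (x : ℝ) : ℝ := ∫ y in Ioi x, exp (-y) * w y

theorem integrableOn_Iic_exp_mul (hw : Integrable w) (a : ℝ) :
    IntegrableOn (fun y => exp y * w y) (Iic a) := by
  refine hw.restrict.bdd_mul (c := exp a) continuous_exp.aestronglyMeasurable.restrict ?_
  refine (ae_restrict_iff' measurableSet_Iic).2 (Eventually.of_forall fun y hy => ?_)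
  rw [norm_of_nonneg (exp_pos y).le]
  exact exp_le_exp.2 hy

theorem integrableOn_Ioi_exp_neg_mul (hw : Integrable w) (a : ℝ) :
    IntegrableOn (fun y => exp (-y) * w y) (Ioi a) := by
  refine hw.restrict.bdd_mul (c := exp (-a))
    (continuous_exp.comp continuous_neg).aestronglyMeasurable.restrict ?_
  refine (ae_restrict_iff' measurableSet_Ioi).2 (Eventually.of_forall fun y hy => ?_)
  rw [norm_of_nonneg (exp_pos _).le]
  exact exp_le_exp.2 (neg_le_neg (le_of_lt hy))

theorem integrable_exp_neg_abs_sub_mul (hw : Integrable w) (x : ℝ) :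
    Integrable (fun y => exp (-|x - y|) * w y) := by
  refine hw.bdd_mul (c := 1) (by fun_prop) (Eventually.of_forall fun y => ?_)
  rw [norm_of_nonneg (exp_pos _).le]
  exact exp_le_one_iff.2 (neg_nonpos.2 (abs_nonneg _))

theorem lam2_eq_left_add_right (hw : Integrable w) (x : ℝ) :
    lam2 w x = (1/2) * (exp (-x) * lam2Left w x + exp x * lam2Right w x) := by
  have hk := integrable_exp_neg_abs_sub_mul hw x
  have hleft : ∫ y in Iic x, exp (-|x - y|) * w y = exp (-x) * lam2Left w x := by
    rw [lam2Left, ← integral_const_mul]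
    refine setIntegral_congr_fun measurableSet_Iic fun y hy => ?_
    rw [← mul_assoc, ← exp_add, abs_of_nonneg (sub_nonneg.2 hy)]
    ring_nf
  have hright : ∫ y in Ioi x, exp (-|x - y|) * w y = exp x * lam2Right w x := by
    rw [lam2Right, ← integral_const_mul]
    refine setIntegral_congr_fun measurableSet_Ioi fun y hy => ?_
    rw [← mul_assoc, ← exp_add, abs_of_neg (sub_neg.2 hy)]
    ring_nf
  rw [lam2, ← intervalIntegral.integral_Iic_add_Ioi hk.integrableOn hk.integrableOn, hleft, hright]

theorem hasDerivAt_lam2Left (hwc : Continuous w) (hwi : Integrable w) (x : ℝ) :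
    HasDerivAt (lam2Left w) (exp x * w x) x :=
  hasDerivAt_setIntegral_Iic (by fun_prop) (integrableOn_Iic_exp_mul hwi) x

theorem hasDerivAt_lam2Right (hwc : Continuous w) (hwi : Integrable w) (x : ℝ) :
    HasDerivAt (lam2Right w) (-(exp (-x) * w x)) x :=
  hasDerivAt_setIntegral_Ioi (by fun_prop) (integrableOn_Ioi_exp_neg_mul hwi) x

theorem hasDerivAt_lam2 (hwc : Continuous w) (hwi : Integrable w) (x : ℝ) :
    HasDerivAt (lam2 w) ((1/2) * (exp x * lam2Right w x - exp (-x) * lam2Left w x)) x := by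
  have hexp_neg : HasDerivAt (fun t => exp (-t)) (-exp (-x)) x := by
    simpa using (hasDerivAt_neg x).exp
  rw [funext (lam2_eq_left_add_right hwi)]
  refine (((hexp_neg.mul (hasDerivAt_lam2Left hwc hwi x)).add
    ((hasDerivAt_exp x).mul (hasDerivAt_lam2Right hwc hwi x))).const_mul (1/2 : ℝ)).congr_deriv ?_
  ring

theorem hasDerivAt_deriv_lam2 (hwc : Continuous w) (hwi : Integrable w) (x : ℝ) :
    HasDerivAt (deriv (lam2 w)) (lam2 w x - w x) x := by
  have hexp_neg : HasDerivAt (fun t => exp (-t)) (-exp (-x)) x := by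
    simpa using (hasDerivAt_neg x).exp
  rw [funext fun x => (hasDerivAt_lam2 hwc hwi x).deriv, lam2_eq_left_add_right hwi]
  refine ((((hasDerivAt_exp x).mul (hasDerivAt_lam2Right hwc hwi x)).sub
    (hexp_neg.mul (hasDerivAt_lam2Left hwc hwi x))).const_mul (1/2 : ℝ)).congr_deriv ?_
  have hinv : exp x * exp (-x) = 1 := by rw [← exp_add, add_neg_cancel, exp_zero]
  linear_combination (-w x) * hinv

theorem lam2_eq_of_deriv_eventuallyEq_zero (hwc : Continuous w) (hwi : Integrable w) {x : ℝ}
    (h : deriv (lam2 w) =ᶠ[𝓝 x] 0) : lam2 w x = w x := by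
  have := (hasDerivAt_deriv_lam2 hwc hwi x).deriv
  rw [h.deriv_eq, Pi.zero_def, deriv_const] at this
  linarith

theorem eq_zero_of_lam2_eq_zero (hwc : Continuous w) (hwi : Integrable w) (hw : 0 ≤ w) {x : ℝ}
    (h : lam2 w x = 0) : w = 0 := by
  have hint : ∫ y, exp (-|x - y|) * w y = 0 := by
    rw [lam2] at h
    linarith
  have hae := (integral_eq_zero_iff_of_nonneg (fun y => mul_nonneg (exp_pos _).le (hw y))
    (integrable_exp_neg_abs_sub_mul hwi x)).1 hint
  have hzero := (Continuous.ae_eq_iff_eq volume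
    ((by fun_prop : Continuous fun y => exp (-|x - y|)).mul hwc) continuous_const).1 hae
  funext y
  exact (mul_eq_zero.1 (congrFun hzero y)).resolve_left (exp_ne_zero _)

end Helmholtz

noncomputable def bEquationSource (b : ℝ) (f : ℝ → ℝ) (x : ℝ) : ℝ :=
  (b/2) * f x ^ 2 + ((3-b)/2) * deriv f x ^ 2

section BEquationSource

variable {b : ℝ} {f : ℝ → ℝ}

theorem bEquationSource_nonneg (hb : b ∈ Ioc (0:ℝ) 3) : 0 ≤ bEquationSource b f := fun x =>
  add_nonneg (mul_nonneg (by linarith [hb.1]) (sq_nonneg _))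
    (mul_nonneg (by linarith [hb.2]) (sq_nonneg _))

theorem eq_zero_of_bEquationSource_eq_zero (hb : b ∈ Ioc (0:ℝ) 3) {x : ℝ}
    (h : bEquationSource b f x = 0) : f x = 0 := by
  have hu : 0 ≤ (b/2) * f x ^ 2 := mul_nonneg (by linarith [hb.1]) (sq_nonneg _)
  have hux : 0 ≤ ((3-b)/2) * deriv f x ^ 2 := mul_nonneg (by linarith [hb.2]) (sq_nonneg _)
  have hsq : (b/2) * f x ^ 2 = 0 := by
    unfold bEquationSource at h
    linarith
  simpa [hb.1.ne'] using hsq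

theorem continuous_bEquationSource (hf : ContDiff ℝ 1 f) : Continuous (bEquationSource b f) := by
  have := hf.continuous_deriv le_rfl
  have := hf.continuous
  unfold bEquationSource
  fun_prop

theorem integrable_bEquationSource {C₀ C₁ : ℝ} (hf : Integrable f) (hC₀ : ∀ x, |f x| ≤ C₀)
    (hf' : Integrable (deriv f)) (hC₁ : ∀ x, |deriv f x| ≤ C₁) :
    Integrable (bEquationSource b f) :=
  ((hf.sq_of_abs_le hC₀).const_mul _).add ((hf'.sq_of_abs_le hC₁).const_mul _)

end BEquationSource

theorem bEquation_vanishing_on_slice_general (b T : ℝ) (hb : b ∈ Set.Ioc (0:ℝ) 3)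
    (u : ℝ → ℝ → ℝ) (hu : IsBEquationSolution b T u)
    (t₀ : ℝ) (ht₀ : t₀ ∈ Set.Ioo (0:ℝ) T) (c d : ℝ) (hcd : c < d)
    (Ω : Set (ℝ × ℝ)) (hΩopen : IsOpen Ω)
    (hslice : {t₀} ×ˢ Set.Icc c d ⊆ Ω)
    (hvan : ∀ p ∈ Ω, u p.1 p.2 = 0) :
    ∀ x : ℝ, u t₀ x = 0 := by
  obtain ⟨hreg, -, heq⟩ := hu
  obtain ⟨hC1, ⟨C₀, hC₀⟩, hint, ⟨C₁, hC₁⟩, hint'⟩ := hreg t₀ (Ioo_subset_Ico_self ht₀)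
  set F := bEquationSource b (u t₀)
  have hFc : Continuous F := continuous_bEquationSource hC1
  have hFi : Integrable F := integrable_bEquationSource hint hC₀ hint' hC₁
  obtain ⟨U, hU, V, hV, hUV⟩ :=
    mem_nhds_prod_iff.1 (hΩopen.mem_nhds (hslice ⟨rfl, left_mem_Icc.2 hcd.le⟩))
  have hvanUV : ∀ s ∈ U, ∀ y ∈ V, u s y = 0 := fun s hs y hy => hvan (s, y) (hUV ⟨hs, hy⟩)
  have hu0 : u t₀ =ᶠ[𝓝 c] 0 := mem_of_superset hV fun y => hvanUV t₀ (mem_of_mem_nhds hU) y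
  have hdt0 : ∀ y ∈ V, deriv (fun s => u s y) t₀ = 0 := fun y hy => by
    have hy0 : (fun s => u s y) =ᶠ[𝓝 t₀] 0 := mem_of_superset hU fun s hs => hvanUV s hs y hy
    rw [hy0.deriv_eq, Pi.zero_def, deriv_const]
  have hlam_deriv : deriv (lam2 F) =ᶠ[𝓝 c] 0 := by
    filter_upwards [hV] with y hy
    have hy_eq : _ = -deriv (lam2 F) y := heq t₀ ht₀ y
    rw [hdt0 y hy, hvanUV t₀ (mem_of_mem_nhds hU) y hy] at hy_eq
    simpa using hy_eq
  have hFc0 : F c = 0 := by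
    simp [F, bEquationSource, hu0.eq_of_nhds, hu0.deriv_eq]
  have hF0 : F = 0 := eq_zero_of_lam2_eq_zero hFc hFi (bEquationSource_nonneg hb)
    ((lam2_eq_of_deriv_eventuallyEq_zero hFc hFi hlam_deriv).trans hFc0)
  exact fun x => eq_zero_of_bEquationSource_eq_zero hb (congrFun hF0 x)

/-- **Unique continuation for the `b`-equation, slice version (section 3.1).**
If a classical solution of the `b`-equation, `b ∈ (0,3]`, vanishes on an open set
`Ω ⊆ (0,T) × ℝ` containing a slice `{t₀} × [c,d]`, then `u(t₀,·) ≡ 0`. -/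
theorem bEquation_vanishing_on_slice (b T : ℝ) (hb : b ∈ Set.Ioc (0:ℝ) 3) (hT : 0 < T)
    (u : ℝ → ℝ → ℝ) (hu : IsBEquationSolution b T u)
    (t₀ : ℝ) (ht₀ : t₀ ∈ Set.Ioo (0:ℝ) T) (c d : ℝ) (hcd : c < d)
    (Ω : Set (ℝ × ℝ)) (hΩopen : IsOpen Ω)
    (hΩsub : Ω ⊆ Set.Ioo (0:ℝ) T ×ˢ Set.univ)
    (hslice : {t₀} ×ˢ Set.Icc c d ⊆ Ω)
    (hvan : ∀ p ∈ Ω, u p.1 p.2 = 0) :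
    ∀ x : ℝ, u t₀ x = 0 :=
  bEquation_vanishing_on_slice_general b T hb u hu t₀ ht₀ c d hcd Ω hΩopen hslice hvan
end

section
/- Let T > 0 and let u be a classical solution of the potential Camassa–Holm equation on [0,T)×ℝ. Assume that the quantity H(t) = ∫_ℝ (∂ₓu(t,x)² + ∂ₓ²u(t,x)²) dx is finite and independent of t ∈ [0,T). If u vanishes identically on a nonempty open subset of (0,T)×ℝ, then u(t,x) = 0 for all (t,x) ∈ [0,T)×ℝ. -/
open MeasureTheory Set Filter


/-- A continuous nonnegative integrable function with zero integral vanishes. -/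
lemma aux_zero_of_integral_zero (f : ℝ → ℝ) (hc : Continuous f) (hnn : ∀ x, 0 ≤ f x)
    (hi : Integrable f) (h0 : (∫ x : ℝ, f x) = 0) : ∀ x, f x = 0 := by
  have hae : f =ᵐ[volume] 0 := (integral_eq_zero_iff_of_nonneg hnn hi).mp h0
  have : f = 0 := (hc.ae_eq_iff_eq volume continuous_const).mp hae
  intro x; exact congrFun this x

/-- A differentiable function with zero derivative decaying at infinity is zero. -/
lemma aux_zero_of_deriv_zero (f : ℝ → ℝ) (hf : Differentiable ℝ f)
    (hd : ∀ x, deriv f x = 0) (h0 : Tendsto f (cocompact ℝ) (nhds 0)) : ∀ x, f x = 0 := by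
  have hconst : ∀ x y, f x = f y := is_const_of_deriv_eq_zero hf hd
  intro x
  have h1 : Tendsto f (cocompact ℝ) (nhds (f x)) := by
    have : f = fun _ => f x := funext fun y => hconst y x
    rw [this]; exact tendsto_const_nhds
  exact tendsto_nhds_unique h1 h0

lemma aux_contDiff_bits (f : ℝ → ℝ) (h : ContDiff ℝ 2 f) :
    Differentiable ℝ f ∧ Continuous (deriv f) ∧ Continuous (deriv (deriv f)) := by
  have h2 : ContDiff ℝ (1+1) f := by norm_num; exact h
  have hd := (contDiff_succ_iff_deriv.mp h2).2.2
  exact ⟨h.differentiable (by norm_num), hd.continuous, hd.continuous_deriv le_rfl⟩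

/-- A classical solution of the potential Camassa-Holm equation in nonlocal form
`uₜ - (1/2)uₓ² = Λ⁻²(uₓ² + (1/2)uₓₓ²)` on `[0,T) × ℝ`: for each `t ∈ [0,T)`,
`u(t,·)` is twice continuously differentiable with `∂ₓu(t,·)` and `∂ₓ²u(t,·)`
continuous, bounded and integrable; `u(t,x) → 0` as `|x| → ∞`; `∂ₜu` exists on
`(0,T) × ℝ`; and the equation holds pointwise on `(0,T) × ℝ`. -/
def IsPotentialCHSolution (T : ℝ) (u : ℝ → ℝ → ℝ) : Prop :=
  (∀ t ∈ Set.Ico (0:ℝ) T,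
    ContDiff ℝ 2 (u t) ∧
    (∃ C : ℝ, ∀ x, |deriv (u t) x| ≤ C) ∧ Integrable (deriv (u t)) ∧
    (∃ C : ℝ, ∀ x, |deriv (deriv (u t)) x| ≤ C) ∧ Integrable (deriv (deriv (u t))) ∧
    Tendsto (u t) (cocompact ℝ) (nhds 0)) ∧
  (∀ t ∈ Set.Ioo (0:ℝ) T, ∀ x : ℝ, DifferentiableAt ℝ (fun s => u s x) t) ∧
  (∀ t ∈ Set.Ioo (0:ℝ) T, ∀ x : ℝ,
    deriv (fun s => u s x) t - (1/2) * (deriv (u t) x)^2 =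
      lam2 (fun y => (deriv (u t) y)^2 + (1/2) * (deriv (deriv (u t)) y)^2) x)

/-- **Unique continuation for the potential Camassa-Holm equation (section 3.3).**
A classical solution of the potential Camassa-Holm equation whose quantity
`H(t) = ∫_ℝ (uₓ² + uₓₓ²) dx` is finite and conserved, and which vanishes on a
nonempty open subset of `(0,T) × ℝ`, vanishes identically. -/
theorem potentialCH_unique_continuation (T : ℝ) (hT : 0 < T)
    (u : ℝ → ℝ → ℝ) (hu : IsPotentialCHSolution T u)
    (hint : ∀ t ∈ Set.Ico (0:ℝ) T,
      Integrable (fun x : ℝ => (deriv (u t) x)^2 + (deriv (deriv (u t)) x)^2))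
    (hcons : ∃ c : ℝ, ∀ t ∈ Set.Ico (0:ℝ) T,
      (∫ x : ℝ, ((deriv (u t) x)^2 + (deriv (deriv (u t)) x)^2)) = c)
    (Ω : Set (ℝ × ℝ)) (hΩopen : IsOpen Ω) (hΩne : Ω.Nonempty)
    (hΩsub : Ω ⊆ Set.Ioo (0:ℝ) T ×ˢ Set.univ)
    (hvan : ∀ p ∈ Ω, u p.1 p.2 = 0) :
    ∀ t ∈ Set.Ico (0:ℝ) T, ∀ x : ℝ, u t x = 0 := by
  obtain ⟨reg, _hdt, heq⟩ := hu
  obtain ⟨c, hc⟩ := hcons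
  obtain ⟨⟨t₀, x₀⟩, hp⟩ := hΩne
  have ht₀ : t₀ ∈ Set.Ioo (0:ℝ) T := (hΩsub hp).1
  have ht₀' : t₀ ∈ Set.Ico (0:ℝ) T := ⟨le_of_lt ht₀.1, ht₀.2⟩
  -- neighborhood in the product
  have hnhds : Ω ∈ nhds (t₀, x₀) := hΩopen.mem_nhds hp
  rw [mem_nhds_prod_iff] at hnhds
  obtain ⟨s, hs, v, hv, hsv⟩ := hnhds
  -- the time derivative at (t₀,x₀) vanishes
  have hteq : (fun τ => u τ x₀) =ᶠ[nhds t₀] (fun _ => (0:ℝ)) := by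
    filter_upwards [hs] with a ha
    exact hvan (a, x₀) (hsv ⟨ha, mem_of_mem_nhds hv⟩)
  have hdt0 : deriv (fun τ => u τ x₀) t₀ = 0 := by
    rw [hteq.deriv_eq, deriv_const]
  -- the space derivative at (t₀,x₀) vanishes
  have hxeq : u t₀ =ᶠ[nhds x₀] (fun _ => (0:ℝ)) := by
    filter_upwards [hv] with b hb
    exact hvan (t₀, b) (hsv ⟨mem_of_mem_nhds hs, hb⟩)
  have hdx0 : deriv (u t₀) x₀ = 0 := by
    rw [hxeq.deriv_eq, deriv_const]
  -- regularity at t₀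
  obtain ⟨hcd, -, -, -, -, -⟩ := reg t₀ ht₀'
  obtain ⟨hdiff, hcf, hcg⟩ := aux_contDiff_bits (u t₀) hcd
  -- the source term w is nonnegative, continuous, integrable
  have hwnn : ∀ y, (0:ℝ) ≤ deriv (u t₀) y ^ 2 + (1/2) * deriv (deriv (u t₀)) y ^ 2 :=
    fun y => by positivity
  have hwcont : Continuous (fun y => deriv (u t₀) y ^ 2 + (1/2) * deriv (deriv (u t₀)) y ^ 2) :=
    (hcf.pow 2).add (continuous_const.mul (hcg.pow 2))
  have hI : Integrable (fun x : ℝ => deriv (u t₀) x ^ 2 + deriv (deriv (u t₀)) x ^ 2) :=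
    hint t₀ ht₀'
  have hf2 : Integrable (fun x : ℝ => deriv (u t₀) x ^ 2) := by
    refine hI.mono ((hcf.pow 2).aestronglyMeasurable) ?_
    filter_upwards with x
    rw [Real.norm_eq_abs, Real.norm_eq_abs, abs_of_nonneg (sq_nonneg (deriv (u t₀) x)),
      abs_of_nonneg (show (0:ℝ) ≤ deriv (u t₀) x ^ 2 + deriv (deriv (u t₀)) x ^ 2 by positivity)]
    nlinarith [sq_nonneg (deriv (deriv (u t₀)) x)]
  have hg2 : Integrable (fun x : ℝ => deriv (deriv (u t₀)) x ^ 2) := by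
    refine hI.mono ((hcg.pow 2).aestronglyMeasurable) ?_
    filter_upwards with x
    rw [Real.norm_eq_abs, Real.norm_eq_abs, abs_of_nonneg (sq_nonneg (deriv (deriv (u t₀)) x)),
      abs_of_nonneg (show (0:ℝ) ≤ deriv (u t₀) x ^ 2 + deriv (deriv (u t₀)) x ^ 2 by positivity)]
    nlinarith [sq_nonneg (deriv (u t₀) x)]
  have hwint : Integrable (fun y => deriv (u t₀) y ^ 2 + (1/2) * deriv (deriv (u t₀)) y ^ 2) :=
    hf2.add (hg2.const_mul (1/2))
  -- the kernel-weighted integrand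
  have hhnn : ∀ y, (0:ℝ) ≤ Real.exp (-|x₀ - y|) *
      (deriv (u t₀) y ^ 2 + (1/2) * deriv (deriv (u t₀)) y ^ 2) :=
    fun y => mul_nonneg (Real.exp_nonneg _) (hwnn y)
  have hhcont : Continuous (fun y => Real.exp (-|x₀ - y|) *
      (deriv (u t₀) y ^ 2 + (1/2) * deriv (deriv (u t₀)) y ^ 2)) :=
    ((Real.continuous_exp.comp ((continuous_const.sub continuous_id).abs.neg))).mul hwcont
  have hhint : Integrable (fun y => Real.exp (-|x₀ - y|) *
      (deriv (u t₀) y ^ 2 + (1/2) * deriv (deriv (u t₀)) y ^ 2)) := by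
    refine hwint.mono hhcont.aestronglyMeasurable ?_
    filter_upwards with y
    rw [Real.norm_eq_abs, Real.norm_eq_abs, abs_of_nonneg (hhnn y), abs_of_nonneg (hwnn y)]
    calc Real.exp (-|x₀ - y|) * (deriv (u t₀) y ^ 2 + (1/2) * deriv (deriv (u t₀)) y ^ 2)
        ≤ 1 * (deriv (u t₀) y ^ 2 + (1/2) * deriv (deriv (u t₀)) y ^ 2) :=
          mul_le_mul_of_nonneg_right
            (Real.exp_le_one_iff.mpr (neg_nonpos.mpr (abs_nonneg _))) (hwnn y)
      _ = _ := one_mul _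
  -- the equation gives the convolution integral = 0
  have heq0 := heq t₀ ht₀ x₀
  rw [hdt0, hdx0] at heq0
  simp only [lam2] at heq0
  have hint0 : (∫ y : ℝ, Real.exp (-|x₀ - y|) *
      (deriv (u t₀) y ^ 2 + (1/2) * deriv (deriv (u t₀)) y ^ 2)) = 0 := by
    have h2 : (0:ℝ) = (1/2) * ∫ y : ℝ, Real.exp (-|x₀ - y|) *
        (deriv (u t₀) y ^ 2 + (1/2) * deriv (deriv (u t₀)) y ^ 2) := by
      rw [← heq0]; ring
    linarith
  -- hence the integrand vanishes, and so does w
  have hh0 := aux_zero_of_integral_zero _ hhcont hhnn hhint hint0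
  have hw0 : ∀ y, deriv (u t₀) y ^ 2 + (1/2) * deriv (deriv (u t₀)) y ^ 2 = 0 := by
    intro y
    have h1 := hh0 y
    have hpos : 0 < Real.exp (-|x₀ - y|) := Real.exp_pos _
    exact (mul_eq_zero.mp h1).resolve_left hpos.ne'
  -- hence c = 0
  have hc0 : c = 0 := by
    rw [← hc t₀ ht₀']
    have hz : (fun x : ℝ => deriv (u t₀) x ^ 2 + deriv (deriv (u t₀)) x ^ 2) =
        fun _ => (0:ℝ) := by
      funext y
      have h1 := hw0 y
      have h2 : deriv (u t₀) y ^ 2 = 0 := by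
        nlinarith [sq_nonneg (deriv (u t₀) y), sq_nonneg (deriv (deriv (u t₀)) y)]
      have h3 : deriv (deriv (u t₀)) y ^ 2 = 0 := by
        nlinarith [sq_nonneg (deriv (u t₀) y), sq_nonneg (deriv (deriv (u t₀)) y)]
      rw [h2, h3]; ring
    rw [hz]
    simp
  -- now handle an arbitrary time t
  intro t ht x
  obtain ⟨hcdt, -, -, -, -, hdecay⟩ := reg t ht
  obtain ⟨hdifft, hcft, hcgt⟩ := aux_contDiff_bits (u t) hcdt
  have hFnn : ∀ y, (0:ℝ) ≤ deriv (u t) y ^ 2 + deriv (deriv (u t)) y ^ 2 :=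
    fun y => by positivity
  have hFcont : Continuous (fun y => deriv (u t) y ^ 2 + deriv (deriv (u t)) y ^ 2) :=
    (hcft.pow 2).add (hcgt.pow 2)
  have hF0 : (∫ y : ℝ, (deriv (u t) y ^ 2 + deriv (deriv (u t)) y ^ 2)) = 0 := by
    rw [hc t ht, hc0]
  have hFzero := aux_zero_of_integral_zero _ hFcont hFnn (hint t ht) hF0
  have hderiv0 : ∀ y, deriv (u t) y = 0 := by
    intro y
    have h1 := hFzero y
    have h2 : deriv (u t) y ^ 2 = 0 := by
      nlinarith [sq_nonneg (deriv (u t) y), sq_nonneg (deriv (deriv (u t)) y)]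
    exact pow_eq_zero_iff two_ne_zero |>.mp h2
  exact aux_zero_of_deriv_zero (u t) hdifft hderiv0 hdecay x
end

section
/- Let T > 0 and let f : ℝ → ℝ be a continuous function with f(x) ≥ 0 for all x and f(x) = 0 if and only if x = 0. Let u : [0,T)×ℝ → ℝ be twice continuously differentiable in t, with u(t,·) continuous and bounded and f(u(t,·)) integrable for each t, satisfying ∂ₜ²u(t,x) = (Λ⁻²f(u(t,·)))(x) − f(u(t,x)) for all (t,x) ∈ (0,T)×ℝ. If there are a nondegenerate interval I ⊆ (0,T), real numbers a < b, and an open set Ω ⊆ (0,T)×ℝ with I×[a,b] ⊆ Ω and u = 0 on Ω, then u(t,x) = 0 for all t ∈ I and all x ∈ ℝ. -/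
open MeasureTheory Set

/-- **Generalised Boussinesq equation, rectangle version (section 4).**
If a solution of `∂ₜ²u = Λ⁻²f(u) - f(u)` (the nonlocal form of
`uₜₜ = ∂ₓ²f(u) + uₜₜₓₓ`), with `f ≥ 0` continuous and vanishing only at `0`,
vanishes on an open set `Ω ⊆ (0,T) × ℝ` containing a rectangle `I × [a,b]` with `I`
a nondegenerate interval, then `u(t,·) ≡ 0` for every `t ∈ I`. -/
theorem boussinesq_vanishing_on_rectangle (T : ℝ) (hT : 0 < T)
    (f : ℝ → ℝ) (hf : Continuous f)
    (hfnn : ∀ x : ℝ, 0 ≤ f x) (hf0 : ∀ x : ℝ, f x = 0 ↔ x = 0)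
    (u : ℝ → ℝ → ℝ)
    -- u is twice continuously differentiable in t
    (hreg : ∀ x : ℝ, ContDiff ℝ 2 (fun t => u t x))
    -- u(t,·) is continuous and bounded, f(u(t,·)) is integrable
    (hucb : ∀ t ∈ Set.Ico (0:ℝ) T,
      Continuous (u t) ∧ (∃ C : ℝ, ∀ x, |u t x| ≤ C) ∧
      Integrable (fun x : ℝ => f (u t x)))
    -- the equation ∂ₜ²u = Λ⁻²f(u) - f(u) holds pointwise on (0,T) × ℝ
    (heq : ∀ t ∈ Set.Ioo (0:ℝ) T, ∀ x : ℝ,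
      deriv (deriv (fun s => u s x)) t = lam2 (fun y => f (u t y)) x - f (u t x))
    -- I ⊆ (0,T) is a nondegenerate interval, Ω an open set with I × [a,b] ⊆ Ω
    (I : Set ℝ) (hIsub : I ⊆ Set.Ioo (0:ℝ) T) (hIconn : I.OrdConnected)
    (hInd : ∃ s ∈ I, ∃ t ∈ I, s ≠ t)
    (a b : ℝ) (hab : a < b)
    (Ω : Set (ℝ × ℝ)) (hΩopen : IsOpen Ω)
    (hΩsub : Ω ⊆ Set.Ioo (0:ℝ) T ×ˢ Set.univ)
    (hrect : I ×ˢ Set.Icc a b ⊆ Ω)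
    (hvan : ∀ p ∈ Ω, u p.1 p.2 = 0) :
    ∀ t ∈ I, ∀ x : ℝ, u t x = 0 := by
  intro t ht x
  -- (t, a) ∈ Ω
  have hta : (t, a) ∈ Ω := hrect ⟨ht, le_refl a, le_of_lt hab⟩
  have htT : t ∈ Set.Ioo (0:ℝ) T := hIsub ht
  -- the slice S = {s | (s,a) ∈ Ω} is open and contains t
  set S : Set ℝ := {s : ℝ | (s, a) ∈ Ω} with hS
  have hSopen : IsOpen S := hΩopen.preimage (Continuous.prodMk_left a)
  have htS : t ∈ S := hta
  have hSzero : ∀ s ∈ S, u s a = 0 := fun s hs => hvan _ hs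
  -- deriv (fun s => u s a) = 0 on S
  have hderiv0 : ∀ s ∈ S, deriv (fun s => u s a) s = 0 := by
    intro s hs
    have hev : (fun s => u s a) =ᶠ[nhds s] (fun _ => (0:ℝ)) :=
      Filter.eventuallyEq_of_mem (hSopen.mem_nhds hs) hSzero
    rw [hev.deriv_eq]
    simp
  -- hence the second derivative at t is 0
  have hev2 : deriv (fun s => u s a) =ᶠ[nhds t] (fun _ => (0:ℝ)) :=
    Filter.eventuallyEq_of_mem (hSopen.mem_nhds htS) hderiv0
  have hdd : deriv (deriv (fun s => u s a)) t = 0 := by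
    rw [hev2.deriv_eq]; simp
  -- the equation at (t, a)
  have heqa := heq t htT a
  have huta : u t a = 0 := hvan _ hta
  have hfta : f (u t a) = 0 := by rw [huta]; exact (hf0 0).mpr rfl
  have hlam : lam2 (fun y => f (u t y)) a = 0 := by
    have := heqa
    rw [hdd, hfta] at this
    linarith
  -- the integrand
  obtain ⟨hcont, -, hint⟩ := hucb t (Set.mem_Ico.mpr ⟨le_of_lt htT.1, htT.2⟩)
  set g : ℝ → ℝ := fun y => Real.exp (-|a - y|) * f (u t y) with hg
  have hgcont : Continuous g := by
    apply Continuous.mul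
    · exact Real.continuous_exp.comp (continuous_const.sub continuous_id).abs.neg
    · exact hf.comp hcont
  have hgnn : ∀ y, 0 ≤ g y := fun y =>
    mul_nonneg (Real.exp_pos _).le (hfnn _)
  have hgint : Integrable g := by
    refine hint.mono' (hgcont.aestronglyMeasurable) ?_
    refine Filter.Eventually.of_forall fun y => ?_
    rw [Real.norm_eq_abs, abs_of_nonneg (hgnn y), hg]
    calc Real.exp (-|a - y|) * f (u t y) ≤ 1 * f (u t y) := by
          apply mul_le_mul_of_nonneg_right _ (hfnn _)
          exact Real.exp_le_one_iff.mpr (neg_nonpos.mpr (abs_nonneg _))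
      _ = f (u t y) := one_mul _
  have hgI : ∫ y, g y = 0 := by
    have : lam2 (fun y => f (u t y)) a = (1/2) * ∫ y, g y := rfl
    rw [this] at hlam
    linarith
  have hgae : g =ᵐ[volume] 0 :=
    (integral_eq_zero_iff_of_nonneg hgnn hgint).mp hgI
  have hg0 : g = 0 := (hgcont.ae_eq_iff_eq volume continuous_const).mp hgae
  have hfx : f (u t x) = 0 := by
    have := congrFun hg0 x
    simp only [hg, Pi.zero_apply] at this
    have hexp : Real.exp (-|a - x|) ≠ 0 := (Real.exp_pos _).ne'
    exact (mul_eq_zero.mp this).resolve_left hexp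
  exact (hf0 _).mp hfx
end
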